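/- The minimizer of the function L ↦ ρ||L||_* + (1/2)||L - A||_F² over ℝ^{m×n} is given by the matrix shrinkage operator U Diag((σ - ρ)_+) Vᵀ, where A = U Diag(σ) Vᵀ is a singular value decomposition of A and (a)_+ = max{a, 0} applied componentwise. -/
import Mathlib


open Matrix BigOperators Finset

variable {m n : ℕ}

/-- Euclidean norm of a vector. -/
noncomputable def e2 {k : ℕ} (v : Fin k → ℝ) : ℝ := Real.sqrt (∑ i, v i ^ 2)

/-- Spectral norm (largest singular value) of a matrix, as the operator norm ℓ2 → ℓ2. -/
noncomputable def specNorm (A : Matrix (Fin m) (Fin n) ℝ) : ℝ :=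
  sSup {c | ∃ x : Fin n → ℝ, e2 x ≤ 1 ∧ c = e2 (A.mulVec x)}

/-- Frobenius (trace) inner product. -/
noncomputable def frobInner (A B : Matrix (Fin m) (Fin n) ℝ) : ℝ := ∑ i, ∑ j, A i j * B i j

/-- Nuclear norm, via duality with the spectral norm. -/
noncomputable def nucNorm (A : Matrix (Fin m) (Fin n) ℝ) : ℝ :=
  sSup {c | ∃ W : Matrix (Fin m) (Fin n) ℝ, specNorm W ≤ 1 ∧ c = frobInner A W}

/-- Frobenius norm. -/
noncomputable def frobNorm (A : Matrix (Fin m) (Fin n) ℝ) : ℝ :=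
  Real.sqrt (∑ i, ∑ j, A i j ^ 2)

/-- Squared Frobenius norm. -/
noncomputable def frobSq (A : Matrix (Fin m) (Fin n) ℝ) : ℝ := ∑ i, ∑ j, A i j ^ 2

/-- Entrywise ℓ1 norm. -/
noncomputable def l1Norm (A : Matrix (Fin m) (Fin n) ℝ) : ℝ := ∑ i, ∑ j, |A i j|

/-- Projection onto the index set Ω (zeroing out entries off Ω). -/
def piom (Ω : Finset (Fin m × Fin n)) (A : Matrix (Fin m) (Fin n) ℝ) :
    Matrix (Fin m) (Fin n) ℝ :=
  Matrix.of fun i j => if (i, j) ∈ Ω then A i j else 0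

-- auxiliary lemmas

lemma e2_nonneg {k : ℕ} (v : Fin k → ℝ) : 0 ≤ e2 v := Real.sqrt_nonneg _

lemma e2_sq {k : ℕ} (v : Fin k → ℝ) : e2 v ^ 2 = ∑ i, v i ^ 2 :=
  Real.sq_sqrt (by positivity)

lemma e2_eq_sqrt_dot {k : ℕ} (v : Fin k → ℝ) : e2 v = Real.sqrt (v ⬝ᵥ v) := by
  unfold e2 dotProduct; congr 1; exact Finset.sum_congr rfl fun i _ => pow_two (v i)

lemma dot_le_e2 {k : ℕ} (u v : Fin k → ℝ) : ∑ i, u i * v i ≤ e2 u * e2 v := by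
  have h := Finset.sum_mul_sq_le_sq_mul_sq univ u v
  calc ∑ i, u i * v i ≤ |∑ i, u i * v i| := le_abs_self _
    _ = Real.sqrt ((∑ i, u i * v i) ^ 2) := (Real.sqrt_sq_eq_abs _).symm
    _ ≤ Real.sqrt ((∑ i, u i ^ 2) * ∑ i, v i ^ 2) := Real.sqrt_le_sqrt h
    _ = e2 u * e2 v := Real.sqrt_mul (by positivity) _

lemma abs_apply_le_e2 {k : ℕ} (v : Fin k → ℝ) (i : Fin k) : |v i| ≤ e2 v := by
  rw [← Real.sqrt_sq_eq_abs]
  exact Real.sqrt_le_sqrt (Finset.single_le_sum (fun j _ => sq_nonneg (v j)) (mem_univ i))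

-- spectral norm facts
lemma e2_mulVec_le (A : Matrix (Fin m) (Fin n) ℝ) (x : Fin n → ℝ) :
    e2 (A.mulVec x) ≤ frobNorm A * e2 x := by
  have h : ∑ i, (A.mulVec x) i ^ 2 ≤ (∑ i, ∑ j, A i j ^ 2) * ∑ j, x j ^ 2 := by
    rw [Finset.sum_mul]
    refine Finset.sum_le_sum fun i _ => ?_
    simpa [Matrix.mulVec, dotProduct] using Finset.sum_mul_sq_le_sq_mul_sq univ (A i) x
  calc e2 (A.mulVec x) = Real.sqrt (∑ i, (A.mulVec x) i ^ 2) := rfl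
    _ ≤ Real.sqrt ((∑ i, ∑ j, A i j ^ 2) * ∑ j, x j ^ 2) := Real.sqrt_le_sqrt h
    _ = frobNorm A * e2 x := Real.sqrt_mul (by positivity) _

lemma specSet_bdd (A : Matrix (Fin m) (Fin n) ℝ) :
    BddAbove {c | ∃ x : Fin n → ℝ, e2 x ≤ 1 ∧ c = e2 (A.mulVec x)} := by
  refine ⟨frobNorm A, fun c hc => ?_⟩
  obtain ⟨x, hx, rfl⟩ := hc
  calc e2 (A.mulVec x) ≤ frobNorm A * e2 x := e2_mulVec_le A x
    _ ≤ frobNorm A * 1 := by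
        exact mul_le_mul_of_nonneg_left hx (Real.sqrt_nonneg _)
    _ = frobNorm A := mul_one _

lemma le_specNorm (A : Matrix (Fin m) (Fin n) ℝ) (x : Fin n → ℝ) (hx : e2 x ≤ 1) :
    e2 (A.mulVec x) ≤ specNorm A :=
  le_csSup (specSet_bdd A) ⟨x, hx, rfl⟩

lemma specNorm_le (A : Matrix (Fin m) (Fin n) ℝ) (c : ℝ) (hc : 0 ≤ c)
    (h : ∀ x : Fin n → ℝ, e2 x ≤ 1 → e2 (A.mulVec x) ≤ c) : specNorm A ≤ c := by
  apply Real.sSup_le _ hc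
  rintro _ ⟨x, hx, rfl⟩
  exact h x hx

lemma entry_le_specNorm (W : Matrix (Fin m) (Fin n) ℝ) (i : Fin m) (j : Fin n) :
    |W i j| ≤ specNorm W := by
  have hsum : ∑ i : Fin n, (Pi.single j (1:ℝ) : Fin n → ℝ) i ^ 2 = 1 := by
    rw [Finset.sum_eq_single j (fun b _ hb => by simp [Pi.single_apply, hb]) (by simp)]
    simp
  have hx : e2 (Pi.single j (1:ℝ)) ≤ 1 := by
    unfold e2; rw [hsum]; simp
  have h := le_specNorm W _ hx
  refine le_trans ?_ h
  have : (W.mulVec (Pi.single j 1)) i = W i j := by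
    simp [Matrix.mulVec_single]
  calc |W i j| = |(W.mulVec (Pi.single j 1)) i| := by rw [this]
    _ ≤ e2 (W.mulVec (Pi.single j 1)) := abs_apply_le_e2 _ i

-- nuclear norm facts
lemma nucSet_bdd (A : Matrix (Fin m) (Fin n) ℝ) :
    BddAbove {c | ∃ W : Matrix (Fin m) (Fin n) ℝ, specNorm W ≤ 1 ∧ c = frobInner A W} := by
  refine ⟨l1Norm A, fun c hc => ?_⟩
  obtain ⟨W, hW, rfl⟩ := hc
  unfold frobInner l1Norm
  refine Finset.sum_le_sum fun i _ => Finset.sum_le_sum fun j _ => ?_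
  calc A i j * W i j ≤ |A i j * W i j| := le_abs_self _
    _ = |A i j| * |W i j| := abs_mul _ _
    _ ≤ |A i j| * 1 := by
        exact mul_le_mul_of_nonneg_left ((entry_le_specNorm W i j).trans hW) (abs_nonneg _)
    _ = |A i j| := mul_one _

lemma frobInner_le_nucNorm (A W : Matrix (Fin m) (Fin n) ℝ) (hW : specNorm W ≤ 1) :
    frobInner A W ≤ nucNorm A :=
  le_csSup (nucSet_bdd A) ⟨W, hW, rfl⟩

lemma nucNorm_le (A : Matrix (Fin m) (Fin n) ℝ) (c : ℝ) (hc : 0 ≤ c)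
    (h : ∀ W : Matrix (Fin m) (Fin n) ℝ, specNorm W ≤ 1 → frobInner A W ≤ c) :
    nucNorm A ≤ c := by
  apply Real.sSup_le _ hc
  rintro _ ⟨W, hW, rfl⟩
  exact h W hW

-- orthonormal columns
lemma col_e2_one {p q : ℕ} (U : Matrix (Fin p) (Fin q) ℝ) (hU : Uᵀ * U = 1) (l : Fin q) :
    e2 (fun i => U i l) = 1 := by
  have h2 := congrFun (congrFun hU l) l
  simp [Matrix.mul_apply, Matrix.one_apply] at h2
  have h : ∑ i, U i l ^ 2 = 1 := by
    calc ∑ i, U i l ^ 2 = ∑ i, U i l * U i l := Finset.sum_congr rfl fun i _ => pow_two _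
      _ = 1 := h2
  unfold e2; rw [h, Real.sqrt_one]

lemma mulVec_dot_self {p q : ℕ} (U : Matrix (Fin p) (Fin q) ℝ) (hU : Uᵀ * U = 1)
    (z : Fin q → ℝ) : (U.mulVec z) ⬝ᵥ (U.mulVec z) = z ⬝ᵥ z := by
  rw [Matrix.dotProduct_mulVec]
  have h : (U.mulVec z) ᵥ* U = z := by
    rw [← Matrix.mulVec_transpose, Matrix.mulVec_mulVec, hU, Matrix.one_mulVec]
  rw [h]

lemma e2_mulVec_orth {p q : ℕ} (U : Matrix (Fin p) (Fin q) ℝ) (hU : Uᵀ * U = 1)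
    (z : Fin q → ℝ) : e2 (U.mulVec z) = e2 z := by
  rw [e2_eq_sqrt_dot, e2_eq_sqrt_dot, mulVec_dot_self U hU z]

lemma e2_transpose_mulVec_le {p q : ℕ} (V : Matrix (Fin p) (Fin q) ℝ) (hV : Vᵀ * V = 1)
    (x : Fin p → ℝ) : e2 (Vᵀ.mulVec x) ≤ e2 x := by
  set y := Vᵀ.mulVec x with hy_def
  have hy : (V.mulVec y) ⬝ᵥ (V.mulVec y) = y ⬝ᵥ y := mulVec_dot_self V hV y
  have hxy : x ⬝ᵥ (V.mulVec y) = y ⬝ᵥ y := by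
    rw [Matrix.dotProduct_mulVec, ← Matrix.mulVec_transpose]
  have hr : 0 ≤ (x - V.mulVec y) ⬝ᵥ (x - V.mulVec y) :=
    Finset.sum_nonneg fun i _ => mul_self_nonneg _
  have expand : (x - V.mulVec y) ⬝ᵥ (x - V.mulVec y)
      = x ⬝ᵥ x - 2 * (x ⬝ᵥ (V.mulVec y)) + (V.mulVec y) ⬝ᵥ (V.mulVec y) := by
    simp only [dotProduct, Pi.sub_apply, Finset.mul_sum, ← Finset.sum_sub_distrib,
      ← Finset.sum_add_distrib]
    exact Finset.sum_congr rfl fun i _ => by ring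
  rw [expand, hxy, hy] at hr
  have key : y ⬝ᵥ y ≤ x ⬝ᵥ x := by linarith
  rw [e2_eq_sqrt_dot, e2_eq_sqrt_dot]
  exact Real.sqrt_le_sqrt key

lemma e2_diag_mulVec_le {q : ℕ} (d : Fin q → ℝ) (hd : ∀ i, |d i| ≤ 1) (y : Fin q → ℝ) :
    e2 ((Matrix.diagonal d).mulVec y) ≤ e2 y := by
  unfold e2
  apply Real.sqrt_le_sqrt
  refine Finset.sum_le_sum fun i _ => ?_
  rw [Matrix.mulVec_diagonal]
  have h1 : d i ^ 2 ≤ 1 := by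
    have := hd i; have := abs_nonneg (d i); nlinarith [sq_abs (d i)]
  calc (d i * y i) ^ 2 = d i ^ 2 * y i ^ 2 := by ring
    _ ≤ 1 * y i ^ 2 := mul_le_mul_of_nonneg_right h1 (sq_nonneg _)
    _ = y i ^ 2 := one_mul _

lemma specNorm_UdV_le {k : ℕ} (U : Matrix (Fin m) (Fin k) ℝ) (V : Matrix (Fin n) (Fin k) ℝ)
    (hU : Uᵀ * U = 1) (hV : Vᵀ * V = 1) (d : Fin k → ℝ) (hd : ∀ i, |d i| ≤ 1) :
    specNorm (U * Matrix.diagonal d * Vᵀ) ≤ 1 := by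
  apply specNorm_le _ _ zero_le_one
  intro x hx
  have hsplit : (U * Matrix.diagonal d * Vᵀ).mulVec x
      = U.mulVec ((Matrix.diagonal d).mulVec (Vᵀ.mulVec x)) := by
    rw [← Matrix.mulVec_mulVec, ← Matrix.mulVec_mulVec]
  rw [hsplit, e2_mulVec_orth U hU]
  exact le_trans (e2_diag_mulVec_le d hd _) (le_trans (e2_transpose_mulVec_le V hV x) hx)

lemma frobInner_eq_trace (A B : Matrix (Fin m) (Fin n) ℝ) :
    frobInner A B = Matrix.trace (Aᵀ * B) := by
  unfold frobInner Matrix.trace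
  simp only [Matrix.diag, Matrix.mul_apply, Matrix.transpose_apply]
  exact Finset.sum_comm


lemma trace_diagonal_mul {q : ℕ} (a : Fin q → ℝ) (N : Matrix (Fin q) (Fin q) ℝ) :
    Matrix.trace (Matrix.diagonal a * N) = ∑ l, a l * N l l := by
  unfold Matrix.trace
  simp [Matrix.diag, Matrix.mul_apply, Matrix.diagonal]

lemma frobInner_UdV_UdV {k : ℕ} (U : Matrix (Fin m) (Fin k) ℝ) (V : Matrix (Fin n) (Fin k) ℝ)
    (hU : Uᵀ * U = 1) (hV : Vᵀ * V = 1) (a b : Fin k → ℝ) :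
    frobInner (U * Matrix.diagonal a * Vᵀ) (U * Matrix.diagonal b * Vᵀ)
      = ∑ l, a l * b l := by
  rw [frobInner_eq_trace]
  have h : (U * Matrix.diagonal a * Vᵀ)ᵀ * (U * Matrix.diagonal b * Vᵀ)
      = V * (Matrix.diagonal (fun l => a l * b l) * Vᵀ) := by
    simp only [Matrix.transpose_mul, Matrix.transpose_transpose,
      Matrix.diagonal_transpose, Matrix.mul_assoc]
    rw [← Matrix.mul_assoc Uᵀ U, hU, Matrix.one_mul,
      ← Matrix.mul_assoc (Matrix.diagonal a), Matrix.diagonal_mul_diagonal]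
  rw [h, ← Matrix.mul_assoc, Matrix.trace_mul_comm, ← Matrix.mul_assoc, hV, Matrix.one_mul,
    Matrix.trace_diagonal]

lemma frobInner_UdV_le {k : ℕ} (U : Matrix (Fin m) (Fin k) ℝ) (V : Matrix (Fin n) (Fin k) ℝ)
    (hU : Uᵀ * U = 1) (hV : Vᵀ * V = 1) (a : Fin k → ℝ) (ha : ∀ i, 0 ≤ a i)
    (W : Matrix (Fin m) (Fin n) ℝ) (hW : specNorm W ≤ 1) :
    frobInner (U * Matrix.diagonal a * Vᵀ) W ≤ ∑ l, a l := by
  rw [frobInner_eq_trace]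
  have h1 : (U * Matrix.diagonal a * Vᵀ)ᵀ * W
      = V * (Matrix.diagonal a * (Uᵀ * W)) := by
    rw [Matrix.transpose_mul, Matrix.transpose_mul, Matrix.transpose_transpose,
      Matrix.diagonal_transpose, Matrix.mul_assoc, Matrix.mul_assoc]
  rw [h1, Matrix.trace_mul_comm, Matrix.mul_assoc, trace_diagonal_mul]
  have key : ∀ l, (Uᵀ * W * V) l l ≤ 1 := by
    intro l
    have hcol : (Uᵀ * W * V) l l = ∑ i, U i l * (W.mulVec (fun j => V j l)) i := by
      simp only [Matrix.mul_apply, Matrix.mulVec, dotProduct, Matrix.transpose_apply,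
        Finset.mul_sum, Finset.sum_mul]
      rw [Finset.sum_comm]
      exact Finset.sum_congr rfl fun i _ => Finset.sum_congr rfl fun j _ => by ring
    have hVcol : e2 (fun j => V j l) ≤ 1 := le_of_eq (col_e2_one V hV l)
    calc (Uᵀ * W * V) l l = ∑ i, U i l * (W.mulVec (fun j => V j l)) i := hcol
      _ ≤ e2 (fun i => U i l) * e2 (W.mulVec (fun j => V j l)) := dot_le_e2 _ _
      _ = e2 (W.mulVec (fun j => V j l)) := by rw [col_e2_one U hU l, one_mul]
      _ ≤ specNorm W := le_specNorm W _ hVcol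
      _ ≤ 1 := hW
  calc ∑ l, a l * (Uᵀ * W * V) l l
      ≤ ∑ l, a l * 1 := Finset.sum_le_sum fun l _ =>
        mul_le_mul_of_nonneg_left (key l) (ha l)
    _ = ∑ l, a l := by simp

-- helper: frobInner with smul
lemma frobInner_smul_right (A B : Matrix (Fin m) (Fin n) ℝ) (r : ℝ) :
    frobInner A (r • B) = r * frobInner A B := by
  unfold frobInner
  simp only [Matrix.smul_apply, smul_eq_mul, Finset.mul_sum]
  exact Finset.sum_congr rfl fun i _ => Finset.sum_congr rfl fun j _ => by ring

/-- the minimizer of `L ↦ ρ‖L‖_* + (1/2)‖L - A‖_F²` is the matrix shrinkage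
`U Diag((σ - ρ)₊) Vᵀ`, where `A = U Diag(σ) Vᵀ` is an SVD of `A`. -/
theorem stmt7 (k : ℕ) (A : Matrix (Fin m) (Fin n) ℝ) (ρ : ℝ) (hρ : 0 < ρ)
    (U : Matrix (Fin m) (Fin k) ℝ) (V : Matrix (Fin n) (Fin k) ℝ) (σ : Fin k → ℝ)
    (hU : Uᵀ * U = 1) (hV : Vᵀ * V = 1) (hσ : ∀ i, 0 ≤ σ i)
    (hA : A = U * Matrix.diagonal σ * Vᵀ)
    (Lshrink : Matrix (Fin m) (Fin n) ℝ)
    (hL : Lshrink = U * Matrix.diagonal (fun i => max (σ i - ρ) 0) * Vᵀ) :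
    ∀ L : Matrix (Fin m) (Fin n) ℝ,
      ρ * nucNorm Lshrink + 1 / 2 * frobSq (Lshrink - A) ≤
        ρ * nucNorm L + 1 / 2 * frobSq (L - A) := by
  intro L
  set τ : Fin k → ℝ := fun l => max (σ l - ρ) 0 with hτ
  set μ : Fin k → ℝ := fun l => min (σ l) ρ with hμ
  have hτ0 : ∀ l, 0 ≤ τ l := fun l => le_max_right _ _
  -- A - Lshrink = U diag μ Vᵀ
  have hfun : (fun l => σ l - τ l) = μ := by
    funext l
    simp only [hτ, hμ]
    rcases le_total (σ l) ρ with h | h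
    · rw [max_eq_right (by linarith), min_eq_left h, sub_zero]
    · rw [max_eq_left (by linarith), min_eq_right h]; ring
  have hG : A - Lshrink = U * Matrix.diagonal μ * Vᵀ := by
    rw [hA, hL, ← Matrix.sub_mul, ← Matrix.mul_sub, Matrix.diagonal_sub]
    rw [hfun]
  -- the dual certificate
  set W₀ : Matrix (Fin m) (Fin n) ℝ :=
    U * Matrix.diagonal (fun l => μ l / ρ) * Vᵀ with hW₀def
  have hW₀ : specNorm W₀ ≤ 1 := by
    apply specNorm_UdV_le U V hU hV
    intro l
    have h0 : 0 ≤ μ l := le_min (hσ l) hρ.le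
    have h1 : μ l ≤ ρ := min_le_right _ _
    rw [abs_of_nonneg (div_nonneg h0 hρ.le)]
    exact div_le_one_of_le₀ h1 hρ.le
  have hfun2 : (ρ • fun l => μ l / ρ) = μ := by
    funext l
    show ρ * (μ l / ρ) = μ l
    field_simp
  have hdiag : Matrix.diagonal μ = ρ • Matrix.diagonal (fun l => μ l / ρ) := by
    rw [← Matrix.diagonal_smul, hfun2]
  have hsmul : U * Matrix.diagonal μ * Vᵀ = ρ • W₀ := by
    rw [hW₀def, ← Matrix.smul_mul, ← Matrix.mul_smul, ← hdiag]
  -- (a) frobInner L (A - Lshrink) ≤ ρ * nucNorm L, for all L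
  have hduala : ∀ M : Matrix (Fin m) (Fin n) ℝ,
      frobInner M (A - Lshrink) ≤ ρ * nucNorm M := by
    intro M
    rw [hG, hsmul, frobInner_smul_right]
    exact mul_le_mul_of_nonneg_left (frobInner_le_nucNorm M W₀ hW₀) hρ.le
  -- (b) nucNorm Lshrink ≤ ∑ τ
  have hnucLs : nucNorm Lshrink ≤ ∑ l, τ l := by
    rw [hL]
    apply nucNorm_le _ _ (Finset.sum_nonneg fun l _ => hτ0 l)
    intro W hW
    exact frobInner_UdV_le U V hU hV τ hτ0 W hW
  -- (c) frobInner Lshrink (A - Lshrink) = ρ * ∑ τ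
  have hinner : frobInner Lshrink (A - Lshrink) = ρ * ∑ l, τ l := by
    rw [hG, hL, frobInner_UdV_UdV U V hU hV, Finset.mul_sum]
    refine Finset.sum_congr rfl fun l _ => ?_
    simp only [hτ, hμ]
    rcases le_total (σ l) ρ with h | h
    · rw [max_eq_right (by linarith)]; ring
    · rw [min_eq_right h]; ring
  -- quadratic expansion
  have expand : frobSq (L - A) = frobSq (Lshrink - A)
      + 2 * frobInner (Lshrink - A) (L - Lshrink) + frobSq (L - Lshrink) := by
    unfold frobSq frobInner
    simp only [Matrix.sub_apply, Finset.mul_sum, ← Finset.sum_add_distrib]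
    exact Finset.sum_congr rfl fun i _ => Finset.sum_congr rfl fun j _ => by ring
  have hcross : frobInner (Lshrink - A) (L - Lshrink)
      = frobInner Lshrink (A - Lshrink) - frobInner L (A - Lshrink) := by
    unfold frobInner
    simp only [Matrix.sub_apply, ← Finset.sum_sub_distrib]
    exact Finset.sum_congr rfl fun i _ => Finset.sum_congr rfl fun j _ => by ring
  have hsq : 0 ≤ frobSq (L - Lshrink) :=
    Finset.sum_nonneg fun i _ => Finset.sum_nonneg fun j _ => sq_nonneg _
  have h1 : ρ * nucNorm Lshrink ≤ ρ * ∑ l, τ l :=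
    mul_le_mul_of_nonneg_left hnucLs hρ.le
  have h2 := hduala L
  rw [expand, hcross]
  linarith
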